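/- Let N ≥ 1, m ≥ 1, let u, u' : Fin m → (ZMod N → ZMod 4) and κ, κ' : Fin m → ZMod 4, and define s(t) = (1+i) · ∑_{k=0}^{m−1} 2^k · i^{u_k(t)} · i^{κ_k} and s'(t) = (1+i) · ∑_{l=0}^{m−1} 2^l · i^{u'_l(t)} · i^{κ'_l}. Fix τ ∈ ZMod N and suppose that for all k, l one has |θ_{u_k,u'_l}(τ)| ≤ 1 + √(N+1). Then |θ_{s,s'}(τ)| ≤ 2·(2^m − 1)²·(1 + √(N+1)). -/

import Mathlib

noncomputable def zi (a : ZMod 4) : ℂ := Complex.I ^ a.val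

noncomputable def pcorr {N : ℕ} [NeZero N] (s s' : ZMod N → ℂ) (τ : ZMod N) : ℂ :=
  ∑ t : ZMod N, s (t + τ) * (starRingEnd ℂ) (s' t)

noncomputable def qcorr {N : ℕ} [NeZero N] (u v : ZMod N → ZMod 4) (τ : ZMod N) : ℂ :=
  ∑ t : ZMod N, zi (u (t + τ)) * (starRingEnd ℂ) (zi (v t))

/-! The correlation is sesquilinear, so expanding both QAM sequences as weighted sums of
quaternary sequences `i^{u_k}` turns `θ_{s,s'}(τ)` into a double sum of the component
correlations `θ_{u_k,u'_l}(τ)`. The triangle inequality then bounds it by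
`(∑_k ‖w_k‖) (∑_l ‖w'_l‖) (1 + √(N+1))`, where the weights `w_k = (1+i) 2^k i^{κ_k}` have
`‖w_k‖ = √2 · 2^k`, so each weight sum is `√2 (2^m - 1)`. -/

open Complex ComplexConjugate Finset

section Correlation

variable {N : ℕ} [NeZero N]

theorem pcorr_sum_mul_sum {ι ι' : Type*} (s : Finset ι) (s' : Finset ι') (a : ι → ℂ)
    (f : ι → ZMod N → ℂ) (b : ι' → ℂ) (g : ι' → ZMod N → ℂ) (τ : ZMod N) :
    pcorr (fun t => ∑ i ∈ s, a i * f i t) (fun t => ∑ j ∈ s', b j * g j t) τ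
      = ∑ i ∈ s, ∑ j ∈ s', a i * conj (b j) * pcorr (f i) (g j) τ := by
  simp only [pcorr, map_sum, map_mul, sum_mul, mul_sum]
  rw [sum_comm_cycle]
  refine sum_congr rfl fun i _ => ?_
  rw [sum_comm]
  exact sum_congr rfl fun j _ => sum_congr rfl fun t _ => by ring

theorem norm_pcorr_sum_mul_sum_le {ι ι' : Type*} (s : Finset ι) (s' : Finset ι') (a : ι → ℂ)
    (f : ι → ZMod N → ℂ) (b : ι' → ℂ) (g : ι' → ZMod N → ℂ) (τ : ZMod N) {B : ℝ}
    (h : ∀ i ∈ s, ∀ j ∈ s', ‖pcorr (f i) (g j) τ‖ ≤ B) :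
    ‖pcorr (fun t => ∑ i ∈ s, a i * f i t) (fun t => ∑ j ∈ s', b j * g j t) τ‖
      ≤ (∑ i ∈ s, ‖a i‖) * (∑ j ∈ s', ‖b j‖) * B := by
  rw [pcorr_sum_mul_sum, sum_mul_sum, sum_mul]
  refine (norm_sum_le _ _).trans (sum_le_sum fun i hi => ?_)
  rw [sum_mul]
  refine (norm_sum_le _ _).trans (sum_le_sum fun j hj => ?_)
  rw [norm_mul, norm_mul, norm_conj]
  gcongr
  exact h i hi j hj

end Correlation

theorem norm_zi (a : ZMod 4) : ‖zi a‖ = 1 := by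
  simp [zi]

theorem norm_one_add_I_sq : ‖1 + I‖ ^ 2 = 2 := by
  rw [Complex.sq_norm, normSq_apply]
  norm_num

theorem sum_two_pow_fin (m : ℕ) : ∑ k : Fin m, (2 : ℝ) ^ (k : ℕ) = 2 ^ m - 1 := by
  rw [Fin.sum_univ_eq_sum_range, geom_sum_eq (by norm_num)]
  norm_num

section QAM

variable {N m : ℕ}

theorem qam_eq_sum (u : Fin m → ZMod N → ZMod 4) (κ : Fin m → ZMod 4) :
    (fun t => (1 + I) * ∑ k : Fin m, (2 : ℂ) ^ (k : ℕ) * zi (u k t) * zi (κ k))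
      = fun t => ∑ k : Fin m, (1 + I) * 2 ^ (k : ℕ) * zi (κ k) * zi (u k t) := by
  funext t
  rw [mul_sum]
  exact sum_congr rfl fun k _ => by ring

theorem sum_norm_qam_weight (κ : Fin m → ZMod 4) :
    ∑ k : Fin m, ‖(1 + I) * 2 ^ (k : ℕ) * zi (κ k)‖ = ‖1 + I‖ * (2 ^ m - 1) := by
  simp only [norm_mul, norm_pow, norm_zi, norm_ofNat, mul_one, ← mul_sum, sum_two_pow_fin]

end QAM

theorem qam_correlation_bound_general (N m : ℕ) [NeZero N]
    (u u' : Fin m → ZMod N → ZMod 4) (κ κ' : Fin m → ZMod 4) (τ : ZMod N)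
    (hcorr : ∀ k l : Fin m,
      ‖qcorr (u k) (u' l) τ‖ ≤ 1 + Real.sqrt (N + 1)) :
    ‖pcorr
      (fun t => (1 + Complex.I) * ∑ k : Fin m, (2 : ℂ) ^ (k : ℕ) * zi (u k t) * zi (κ k))
      (fun t => (1 + Complex.I) * ∑ l : Fin m, (2 : ℂ) ^ (l : ℕ) * zi (u' l t) * zi (κ' l))
      τ‖
    ≤ 2 * (2 ^ m - 1) ^ 2 * (1 + Real.sqrt (N + 1)) := by
  rw [qam_eq_sum, qam_eq_sum]
  calc _ ≤ (∑ k : Fin m, ‖(1 + I) * 2 ^ (k : ℕ) * zi (κ k)‖)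
          * (∑ l : Fin m, ‖(1 + I) * 2 ^ (l : ℕ) * zi (κ' l)‖) * (1 + Real.sqrt (N + 1)) :=
        norm_pcorr_sum_mul_sum_le _ _ _ (fun k t => zi (u k t)) _ (fun l t => zi (u' l t)) _
          fun k _ l _ => hcorr k l
    _ = 2 * (2 ^ m - 1) ^ 2 * (1 + Real.sqrt (N + 1)) := by
        rw [sum_norm_qam_weight, sum_norm_qam_weight, ← norm_one_add_I_sq]
        ring

/-- Maximum-correlation bound for the canonical QAM family: if all
pairwise component correlations at shift `τ` are bounded by `1 + √(N+1)`, then the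
correlation of the two `4^m`-QAM sequences is bounded by `2(2^m - 1)²(1 + √(N+1))`. -/
theorem qam_correlation_bound (N m : ℕ) [NeZero N] (hm : 1 ≤ m)
    (u u' : Fin m → ZMod N → ZMod 4) (κ κ' : Fin m → ZMod 4) (τ : ZMod N)
    (hcorr : ∀ k l : Fin m,
      ‖qcorr (u k) (u' l) τ‖ ≤ 1 + Real.sqrt (N + 1)) :
    ‖pcorr
      (fun t => (1 + Complex.I) * ∑ k : Fin m, (2 : ℂ) ^ (k : ℕ) * zi (u k t) * zi (κ k))
      (fun t => (1 + Complex.I) * ∑ l : Fin m, (2 : ℂ) ^ (l : ℕ) * zi (u' l t) * zi (κ' l))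
      τ‖
    ≤ 2 * (2 ^ m - 1) ^ 2 * (1 + Real.sqrt (N + 1)) :=
  qam_correlation_bound_general N m u u' κ κ' τ hcorr
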